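/- Let α, β ∈ ℝ with α ≠ 1 and 2αβ ≠ 1, and define F(x¹,x²) = [Δ₁^α + Δ₂^α + Δ₃^α]^β where Δ₁, Δ₂, Δ₃ are the 2×2 minors of the 3×2 matrix x. Then at any point x where all quantities are positive and well-defined, setting y = F'(x) with minors D¹, D², D³, one has ⟨x,y⟩ − F(x) = (2αβ−1)(αβ)^(−2αβ/(2αβ−1)) [(D¹)^(α/(α−1)) + (D²)^(α/(α−1)) + (D³)^(α/(α−1))]^(β(α−1)/(2αβ−1)). -/

import Mathlib

/-!
`F` is built from the quadratic forms `Δₘ`, so its gradient is a combination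
`y = ∑ₘ wₘ ∇Δₘ` with `wₘ = αβ S^(β-1) Δₘ^(α-1)`, `S = ∑ Δₘ^α`. Two polynomial identities
for such combinations do the work: Euler's identity `⟨x, ∑ wₘ ∇Δₘ⟩ = 2 ∑ wₘ Δₘ`, which gives
`⟨x,y⟩ - F = (2αβ - 1) S^β`, and `Dᵐ = wₘ ∑ⱼ wⱼ Δⱼ` for the minors of the combination, which
makes every `Dᵐ` the same multiple of `Δₘ^(α-1)`. Raising to the power `α/(α-1)` turns
`∑ (Dᵐ)^(α/(α-1))` back into a multiple of `S`, and what is left is bookkeeping of exponents.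
-/

attribute [local instance] Matrix.normedAddCommGroup Matrix.normedSpace

/-- The three `2×2` minors (at indices `0, 1, 2`) of a `3×2` matrix. -/
def minors32 (x : Matrix (Fin 3) (Fin 2) ℝ) : Fin 3 → ℝ :=
  ![x 1 0 * x 2 1 - x 1 1 * x 2 0,
    x 0 0 * x 2 1 - x 0 1 * x 2 0,
    x 0 0 * x 1 1 - x 0 1 * x 1 0]

open Matrix

section Pairing

variable {m n : Type*} [Fintype m] [Fintype n]

def pairingLinearMap (G : Matrix n m ℝ) : Matrix m n ℝ →ₗ[ℝ] ℝ where
  toFun v := ∑ i, ∑ j, v i j * G j i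
  map_add' v w := by simp only [Matrix.add_apply, add_mul, Finset.sum_add_distrib]
  map_smul' c v := by
    simp only [Matrix.smul_apply, smul_eq_mul, mul_assoc, Finset.mul_sum, RingHom.id_apply]

/- Built with `mkContinuous` so that its type carries the topology of the norm on matrices,
the one in which the calculus lemmas below produce their derivatives. -/
noncomputable def pairingCLM (G : Matrix n m ℝ) :=
  (pairingLinearMap G).mkContinuous (∑ i, ∑ j, ‖G j i‖) fun v => by
    simp only [pairingLinearMap, LinearMap.coe_mk, AddHom.coe_mk, Finset.sum_mul]
    refine (norm_sum_le _ _).trans (Finset.sum_le_sum fun i _ => (norm_sum_le _ _).trans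
      (Finset.sum_le_sum fun j _ => ?_))
    rw [norm_mul, mul_comm]
    exact mul_le_mul_of_nonneg_left (norm_entry_le_entrywise_sup_norm v) (norm_nonneg _)

@[simp]
lemma pairingCLM_apply (G : Matrix n m ℝ) (v : Matrix m n ℝ) :
    pairingCLM G v = ∑ i, ∑ j, v i j * G j i := rfl

variable [DecidableEq m] [DecidableEq n]

lemma pairingCLM_single (G : Matrix n m ℝ) (i : m) (j : n) (c : ℝ) :
    pairingCLM G (single i j c) = c * G j i := by
  simp [single_apply, ite_and]

lemma pairingCLM_single_left (i : m) (j : n) (c : ℝ) (v : Matrix m n ℝ) :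
    pairingCLM (single j i c) v = v i j * c := by
  simp [single_apply, ite_and]

lemma hasFDerivAt_entry (x : Matrix m n ℝ) (i : m) (j : n) :
    HasFDerivAt (fun z : Matrix m n ℝ => z i j) (pairingCLM (single j i 1)) x := by
  convert (pairingCLM (single j i (1 : ℝ))).hasFDerivAt using 1
  funext z
  rw [pairingCLM_single_left, mul_one]

end Pairing

section RowMinor

variable {m : Type*} [Fintype m] [DecidableEq m]

def rowMinorGrad (x : Matrix m (Fin 2) ℝ) (a c : m) : Matrix (Fin 2) m ℝ :=
  single 0 a (x c 1) + single 1 c (x a 0) - single 1 a (x c 0) - single 0 c (x a 1)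

lemma hasFDerivAt_rowMinor (x : Matrix m (Fin 2) ℝ) (a c : m) :
    HasFDerivAt (fun z : Matrix m (Fin 2) ℝ => z a 0 * z c 1 - z a 1 * z c 0)
      (pairingCLM (rowMinorGrad x a c)) x := by
  refine (((hasFDerivAt_entry x a 0).mul (hasFDerivAt_entry x c 1)).sub
    ((hasFDerivAt_entry x a 1).mul (hasFDerivAt_entry x c 0))).congr_fderiv ?_
  ext v
  simp only [pairingCLM_apply, rowMinorGrad, Matrix.add_apply, Matrix.sub_apply, mul_add,
    mul_sub, Finset.sum_add_distrib, Finset.sum_sub_distrib]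
  simp [single_apply]
  ring

end RowMinor

def minors32Grad (x : Matrix (Fin 3) (Fin 2) ℝ) : Fin 3 → Matrix (Fin 2) (Fin 3) ℝ :=
  ![rowMinorGrad x 1 2, rowMinorGrad x 0 2, rowMinorGrad x 0 1]

lemma hasFDerivAt_minors32 (x : Matrix (Fin 3) (Fin 2) ℝ) (i : Fin 3) :
    HasFDerivAt (fun z => minors32 z i) (pairingCLM (minors32Grad x i)) x := by
  fin_cases i <;> exact hasFDerivAt_rowMinor x _ _

lemma pairingCLM_sum_smul_minors32Grad (x : Matrix (Fin 3) (Fin 2) ℝ) (w : Fin 3 → ℝ) :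
    pairingCLM (∑ i, w i • minors32Grad x i) x = 2 * ∑ i, w i * minors32 x i := by
  simp [minors32Grad, rowMinorGrad, minors32, Fin.sum_univ_three, single_apply]
  ring

lemma minors32_transpose_sum_smul_minors32Grad (x : Matrix (Fin 3) (Fin 2) ℝ)
    (w : Fin 3 → ℝ) (j : Fin 3) :
    minors32 (∑ i, w i • minors32Grad x i)ᵀ j = w j * ∑ i, w i * minors32 x i := by
  fin_cases j <;> simp [minors32Grad, rowMinorGrad, minors32, Fin.sum_univ_three] <;> ring

theorem HasFDerivAt.rpow_sum_rpow {E ι : Type*} [NormedAddCommGroup E] [NormedSpace ℝ E]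
    [Fintype ι] [Nonempty ι] {g : ι → E → ℝ} {g' : ι → E →L[ℝ] ℝ} {x : E} (α β : ℝ)
    (hg : ∀ i, HasFDerivAt (g i) (g' i) x) (hpos : ∀ i, 0 < g i x) :
    HasFDerivAt (fun z => (∑ i, g i z ^ α) ^ β)
      ((β * (∑ i, g i x ^ α) ^ (β - 1)) • ∑ i, (α * g i x ^ (α - 1)) • g' i) x := by
  have hS : 0 < ∑ i, g i x ^ α :=
    Finset.sum_pos (fun i _ => Real.rpow_pos_of_pos (hpos i) α) Finset.univ_nonempty
  exact (HasFDerivAt.fun_sum fun i _ => (hg i).rpow_const (Or.inl (hpos i).ne')).rpow_const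
    (Or.inl hS.ne')

lemma sum_rpow_mul_rpow_sub_one {ι : Type*} [Fintype ι] {a : ι → ℝ} (ha : ∀ i, 0 < a i)
    {K : ℝ} (hK : 0 ≤ K) {α : ℝ} (hα : α ≠ 1) :
    ∑ i, (K * a i ^ (α - 1)) ^ (α / (α - 1)) = K ^ (α / (α - 1)) * ∑ i, a i ^ α := by
  have hexp : (α - 1) * (α / (α - 1)) = α := mul_div_cancel₀ α (sub_ne_zero.mpr hα)
  rw [Finset.mul_sum]
  refine Finset.sum_congr rfl fun i _ => ?_
  rw [Real.mul_rpow hK (Real.rpow_nonneg (ha i).le _), ← Real.rpow_mul (ha i).le, hexp]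

lemma rpow_legendre_exponents {α β s : ℝ} (hs : 0 < s) (hαβ : 0 < α * β) (hα : α ≠ 1)
    (h2 : 2 * α * β ≠ 1) :
    (α * β) ^ (-(2 * α * β) / (2 * α * β - 1)) *
        ((α * β * s ^ (β - 1) * (α * β * s ^ β)) ^ (α / (α - 1)) * s)
          ^ (β * (α - 1) / (2 * α * β - 1)) = s ^ β := by
  have h21 : 2 * α * β - 1 ≠ 0 := sub_ne_zero.mpr h2
  have hpq : α / (α - 1) * (β * (α - 1) / (2 * α * β - 1)) = α * β / (2 * α * β - 1) := by
    have := sub_ne_zero.mpr hα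
    field_simp
  have e1 : -(2 * α * β) / (2 * α * β - 1) +
      2 * (α / (α - 1)) * (β * (α - 1) / (2 * α * β - 1)) = 0 := by
    rw [mul_assoc (2 : ℝ) (α / (α - 1)), hpq]
    ring
  have e2 : (2 * β - 1) * (α / (α - 1)) * (β * (α - 1) / (2 * α * β - 1)) +
      β * (α - 1) / (2 * α * β - 1) = β := by
    rw [mul_assoc (2 * β - 1), hpq, mul_div_assoc', ← add_div, div_eq_iff h21]
    ring
  generalize α * β = t at hαβ ⊢
  have hK : (t * s ^ (β - 1) * (t * s ^ β)) ^ (α / (α - 1)) =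
      t ^ (2 * (α / (α - 1))) * s ^ ((2 * β - 1) * (α / (α - 1))) := by
    rw [Real.rpow_mul hαβ.le, Real.rpow_mul hs.le,
      ← Real.mul_rpow (by positivity) (by positivity), show 2 * β - 1 = (β - 1) + β by ring,
      Real.rpow_add hs, Real.rpow_two]
    congr 1
    ring
  rw [hK, Real.mul_rpow (by positivity) hs.le, Real.mul_rpow (by positivity) (by positivity),
    ← Real.rpow_mul hαβ.le, ← Real.rpow_mul hs.le, ← mul_assoc, ← mul_assoc,
    ← Real.rpow_add hαβ, mul_assoc, ← Real.rpow_add hs, e1, e2, Real.rpow_zero, one_mul]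

noncomputable def gradWeights (α β : ℝ) (x : Matrix (Fin 3) (Fin 2) ℝ) (i : Fin 3) : ℝ :=
  α * β * (∑ j, minors32 x j ^ α) ^ (β - 1) * minors32 x i ^ (α - 1)

section GradWeights

variable {α β : ℝ} {x : Matrix (Fin 3) (Fin 2) ℝ}

lemma sum_gradWeights_mul_minors32 (hx : ∀ m, 0 < minors32 x m) :
    ∑ i, gradWeights α β x i * minors32 x i = α * β * (∑ i, minors32 x i ^ α) ^ β := by
  have hS : 0 < ∑ i, minors32 x i ^ α :=
    Finset.sum_pos (fun i _ => Real.rpow_pos_of_pos (hx i) α) Finset.univ_nonempty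
  have hΔ : ∀ i, minors32 x i ^ (α - 1) * minors32 x i = minors32 x i ^ α := fun i => by
    rw [← Real.rpow_add_one (hx i).ne', sub_add_cancel]
  simp only [gradWeights, mul_assoc, hΔ, ← Finset.mul_sum]
  rw [← Real.rpow_add_one hS.ne', sub_add_cancel]

lemma fderiv_rpow_sum_rpow_minors32_single (hx : ∀ m, 0 < minors32 x m) (k : Fin 2)
    (n : Fin 3) :
    fderiv ℝ (fun z : Matrix (Fin 3) (Fin 2) ℝ =>
        ((minors32 z 0) ^ α + (minors32 z 1) ^ α + (minors32 z 2) ^ α) ^ β) x (single n k 1) =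
      (∑ i, gradWeights α β x i • minors32Grad x i) k n := by
  have hF := HasFDerivAt.rpow_sum_rpow α β (hasFDerivAt_minors32 x) hx
  simp only [Fin.sum_univ_three] at hF
  -- the `fderiv` on the left is taken in the plain topology on matrices, `hF` in the normed one
  refine (DFunLike.congr_fun hF.fderiv _).trans ?_
  simp only [_root_.add_apply, _root_.smul_apply, pairingCLM_single, Matrix.sum_apply,
    Matrix.smul_apply, Fin.sum_univ_three, smul_eq_mul, gradWeights]
  ring

end GradWeights

/-- Legendre transform of `F(x¹,x²) = (Δ₁^α + Δ₂^α + Δ₃^α)^β`: at a point with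
positive minors, with `y = F'(x)` and minors `D¹, D², D³` of `y`,
`⟨x,y⟩ - F(x) = (2αβ-1)(αβ)^{-2αβ/(2αβ-1)} (Σ (Dⁿ)^{α/(α-1)})^{β(α-1)/(2αβ-1)}`. -/
theorem legendre_power_minors (α β : ℝ) (hα : α ≠ 1) (hαβ : 0 < α * β)
    (h2 : 2 * α * β ≠ 1)
    (x : Matrix (Fin 3) (Fin 2) ℝ) (hx : ∀ m, 0 < minors32 x m)
    (y : Matrix (Fin 2) (Fin 3) ℝ)
    (hy : ∀ k n, y k n =
      fderiv ℝ (fun z : Matrix (Fin 3) (Fin 2) ℝ =>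
          ((minors32 z 0) ^ α + (minors32 z 1) ^ α + (minors32 z 2) ^ α) ^ β) x
        (Matrix.single n k 1))
    (D : Fin 3 → ℝ)
    (hD1 : D 0 = y 0 1 * y 1 2 - y 1 1 * y 0 2)
    (hD2 : D 1 = y 0 0 * y 1 2 - y 1 0 * y 0 2)
    (hD3 : D 2 = y 0 0 * y 1 1 - y 1 0 * y 0 1) :
    (∑ n, ∑ k, x n k * y k n)
        - ((minors32 x 0) ^ α + (minors32 x 1) ^ α + (minors32 x 2) ^ α) ^ β
      = (2 * α * β - 1) * (α * β) ^ (-(2 * α * β) / (2 * α * β - 1)) *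
          ((D 0) ^ (α / (α - 1)) + (D 1) ^ (α / (α - 1)) + (D 2) ^ (α / (α - 1)))
            ^ (β * (α - 1) / (2 * α * β - 1)) := by
  set S := ∑ i, minors32 x i ^ α with hS_def
  have hS : 0 < S :=
    Finset.sum_pos (fun i _ => Real.rpow_pos_of_pos (hx i) α) Finset.univ_nonempty
  have hy_grad : y = ∑ i, gradWeights α β x i • minors32Grad x i := by
    ext k n
    rw [hy, fderiv_rpow_sum_rpow_minors32_single hx]
  have hinner : ∑ n, ∑ k, x n k * y k n = 2 * (α * β * S ^ β) := by
    rw [← sum_gradWeights_mul_minors32 hx, ← pairingCLM_sum_smul_minors32Grad, ← hy_grad]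
    rfl
  have hD : ∀ i, D i = α * β * S ^ (β - 1) * (α * β * S ^ β) * minors32 x i ^ (α - 1) := by
    intro i
    have hDy : D i = minors32 yᵀ i := by fin_cases i <;> simp [minors32, hD1, hD2, hD3]
    rw [hDy, hy_grad, minors32_transpose_sum_smul_minors32Grad, sum_gradWeights_mul_minors32 hx,
      gradWeights]
    ring
  have hsumD : (D 0) ^ (α / (α - 1)) + (D 1) ^ (α / (α - 1)) + (D 2) ^ (α / (α - 1)) =
      (α * β * S ^ (β - 1) * (α * β * S ^ β)) ^ (α / (α - 1)) * S := by
    rw [← Fin.sum_univ_three (fun i => D i ^ (α / (α - 1)))]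
    simp_rw [hD]
    exact sum_rpow_mul_rpow_sub_one hx (by positivity) hα
  rw [hinner, ← Fin.sum_univ_three (fun i => minors32 x i ^ α), ← hS_def, hsumD,
    mul_assoc _ ((α * β) ^ _), rpow_legendre_exponents hS hαβ hα h2]
  ring
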